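/- Let A be a nonzero real m×n matrix of rank r, α > 0, β^I = max_i ‖A_{I_i,:}‖₂²/‖A_{I_i,:}‖_F² for a row partition {I_1,…,I_s}, and suppose 0 < α < 2/β^I. For x ∈ ℝ^n with x − A†b ∈ ran(Aᵀ), define x̂ = x − (α/‖A_{I_i,:}‖_F²)(A_{I_i,:})ᵀ A_{I_i,:}(x − A†b), where i is sampled with probability ‖A_{I_i,:}‖_F²/‖A‖_F². Then E‖x̂ − A†b‖₂² ≤ η ‖x − A†b‖₂², where η = 1 − (2α − α²β^I)σ_r(A)²/‖A‖_F². -/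

import Mathlib

open Matrix

/-- The squared Frobenius norm of a real matrix. -/
noncomputable def frobSq {ι κ : Type*} [Fintype ι] [Fintype κ] (A : Matrix ι κ ℝ) : ℝ :=
  ∑ i, ∑ j, (A i j) ^ 2

/-- The spectral (ℓ₂ operator) norm of a real matrix. -/
noncomputable def specNorm {ι κ : Type*} [Fintype ι] [Fintype κ] [DecidableEq κ]
    (A : Matrix ι κ ℝ) : ℝ :=
  ‖LinearMap.toContinuousLinearMap (Matrix.toEuclideanLin A)‖

/-- The squared Euclidean norm of a vector. -/
noncomputable def norm2Sq {ι : Type*} [Fintype ι] (v : ι → ℝ) : ℝ := ∑ i, (v i) ^ 2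

/-- `P` is the Moore–Penrose pseudoinverse of `A`. -/
def IsMoorePenrose {m n : ℕ} (A : Matrix (Fin m) (Fin n) ℝ)
    (P : Matrix (Fin n) (Fin m) ℝ) : Prop :=
  A * P * A = A ∧ P * A * P = P ∧ (A * P)ᵀ = A * P ∧ (P * A)ᵀ = P * A

/-- The row submatrix of `A` indexed by the finite set `I`. -/
def rowSub {m n : ℕ} (A : Matrix (Fin m) (Fin n) ℝ) (I : Finset (Fin m)) :
    Matrix I (Fin n) ℝ :=
  A.submatrix (fun i => (i : Fin m)) id
/-!
Write `e = x - A†b`. A step on block `I` maps `e` to `e - (α / ‖A_I‖_F²) A_Iᵀ A_I e`; expanding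
the square and using `‖A_Iᵀ A_I e‖² ≤ ‖A_I‖₂² ‖A_I e‖² ≤ βᴵ ‖A_I‖_F² ‖A_I e‖²`, the weighted error
of each block is at most `(‖A_I‖_F² ‖e‖² - (2α - α²βᴵ) ‖A_I e‖²) / ‖A‖_F²`. Summing over the
partition turns the `‖A_I e‖²` into `‖A e‖²`. Finally `e ∈ ran Aᵀ` is orthogonal to
`ker A = ker AᵀA`, so in an eigenbasis of `AᵀA` it has no component along eigenvalue `0`, whence
`‖A e‖² = eᵀ AᵀA e ≥ σ_r² ‖e‖²`.
-/

open scoped Matrix.Norms.L2Operator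

section Norms

variable {ι κ : Type*} [Fintype ι] [Fintype κ]

lemma norm2Sq_eq_dotProduct (v : ι → ℝ) : norm2Sq v = v ⬝ᵥ v := by
  simp only [norm2Sq, dotProduct, sq]

lemma norm2Sq_eq_norm_toLp_sq (v : ι → ℝ) : norm2Sq v = ‖WithLp.toLp 2 v‖ ^ 2 := by
  simp [norm2Sq, EuclideanSpace.norm_sq_eq]

lemma norm2Sq_sub_smul (e v : ι → ℝ) (t : ℝ) :
    norm2Sq (e - t • v) = norm2Sq e - 2 * t * (e ⬝ᵥ v) + t ^ 2 * norm2Sq v := by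
  simp only [norm2Sq_eq_dotProduct, sub_dotProduct, dotProduct_sub, smul_dotProduct,
    dotProduct_smul, dotProduct_comm v e, smul_eq_mul]
  ring

lemma norm2Sq_mulVec_eq_dotProduct_mulVec (A : Matrix ι κ ℝ) (v : κ → ℝ) :
    norm2Sq (A *ᵥ v) = v ⬝ᵥ (Aᵀ * A) *ᵥ v := by
  rw [norm2Sq_eq_dotProduct, ← mulVec_mulVec, dotProduct_mulVec v, vecMul_transpose]

lemma frobSq_pos {A : Matrix ι κ ℝ} (hA : A ≠ 0) : 0 < frobSq A := by
  obtain ⟨i, j, hij⟩ : ∃ i j, A i j ≠ 0 := by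
    by_contra! h
    exact hA (Matrix.ext h)
  calc 0 < A i j ^ 2 := by positivity
    _ ≤ ∑ j', A i j' ^ 2 := Finset.single_le_sum (fun _ _ => sq_nonneg _) (Finset.mem_univ j)
    _ ≤ frobSq A := Finset.single_le_sum (f := fun i => ∑ j, A i j ^ 2)
        (fun _ _ => Finset.sum_nonneg fun _ _ => sq_nonneg _) (Finset.mem_univ i)

variable [DecidableEq κ]

lemma specNorm_eq_l2_opNorm (A : Matrix ι κ ℝ) : specNorm A = ‖A‖ := rfl

lemma specNorm_transpose [DecidableEq ι] (A : Matrix ι κ ℝ) : specNorm Aᵀ = specNorm A := by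
  rw [specNorm_eq_l2_opNorm, specNorm_eq_l2_opNorm, ← conjTranspose_eq_transpose_of_trivial,
    l2_opNorm_conjTranspose]

lemma norm2Sq_mulVec_le (A : Matrix ι κ ℝ) (v : κ → ℝ) :
    norm2Sq (A *ᵥ v) ≤ specNorm A ^ 2 * norm2Sq v := by
  rw [norm2Sq_eq_norm_toLp_sq, norm2Sq_eq_norm_toLp_sq, specNorm_eq_l2_opNorm, ← mul_pow]
  gcongr
  exact A.l2_opNorm_mulVec (WithLp.toLp 2 v)

end Norms

theorem OrthonormalBasis.sum_dotProduct_mul_dotProduct {ι : Type*} [Fintype ι]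
    (b : OrthonormalBasis ι ℝ (EuclideanSpace ℝ ι)) (x y : ι → ℝ) :
    ∑ j, (b j ⬝ᵥ x) * (b j ⬝ᵥ y) = x ⬝ᵥ y := by
  have h := b.sum_inner_mul_inner (WithLp.toLp 2 x) (WithLp.toLp 2 y)
  simp only [EuclideanSpace.inner_eq_star_dotProduct, star_trivial] at h
  simpa only [dotProduct_comm y] using h

theorem Matrix.IsHermitian.mul_dotProduct_self_le {ι : Type*} [Fintype ι] [DecidableEq ι]
    {T : Matrix ι ι ℝ} (hT : T.IsHermitian) {c : ℝ}
    (hc : ∀ j, hT.eigenvalues j ≠ 0 → c ≤ hT.eigenvalues j) {e : ι → ℝ}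
    (he : ∀ v, T *ᵥ v = 0 → v ⬝ᵥ e = 0) :
    c * (e ⬝ᵥ e) ≤ e ⬝ᵥ T *ᵥ e := by
  set b := hT.eigenvectorBasis
  have hsymm : Tᵀ = T := by rw [← conjTranspose_eq_transpose_of_trivial]; exact hT.eq
  have coord_mulVec (j : ι) : b j ⬝ᵥ T *ᵥ e = hT.eigenvalues j * (b j ⬝ᵥ e) := by
    rw [dotProduct_mulVec, ← mulVec_transpose, hsymm,
      hT.mulVec_eigenvectorBasis, smul_dotProduct, smul_eq_mul]
  rw [← b.sum_dotProduct_mul_dotProduct, ← b.sum_dotProduct_mul_dotProduct, Finset.mul_sum]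
  refine Finset.sum_le_sum fun j _ => ?_
  rw [coord_mulVec]
  by_cases hj : hT.eigenvalues j = 0
  · have : b j ⬝ᵥ e = 0 := he _ (by rw [hT.mulVec_eigenvectorBasis, hj, zero_smul])
    simp [this]
  · nlinarith [hc j hj, mul_self_nonneg (b j ⬝ᵥ e)]

theorem Matrix.mul_norm2Sq_le_norm2Sq_mulVec_transpose_mulVec {ι κ : Type*} [Fintype ι]
    [Fintype κ] [DecidableEq κ] {A : Matrix ι κ ℝ} (hH : (Aᵀ * A).IsHermitian) {c : ℝ}
    (hc : ∀ j, hH.eigenvalues j ≠ 0 → c ≤ hH.eigenvalues j) (w : ι → ℝ) :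
    c * norm2Sq (Aᵀ *ᵥ w) ≤ norm2Sq (A *ᵥ Aᵀ *ᵥ w) := by
  have h_ker (v : κ → ℝ) (hv : (Aᵀ * A) *ᵥ v = 0) : v ⬝ᵥ Aᵀ *ᵥ w = 0 := by
    rw [← conjTranspose_eq_transpose_of_trivial, conjTranspose_mul_self_mulVec_eq_zero] at hv
    rw [dotProduct_mulVec, vecMul_transpose, hv, zero_dotProduct]
  rw [norm2Sq_eq_dotProduct, norm2Sq_mulVec_eq_dotProduct_mulVec]
  exact hH.mul_dotProduct_self_le hc h_ker

lemma frobSq_mul_norm2Sq_sub_smul_gram_le {ι κ : Type*} [Fintype ι] [Fintype κ] [DecidableEq ι]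
    [DecidableEq κ] {M : Matrix ι κ ℝ} (hM : M ≠ 0) {β : ℝ}
    (hβ : specNorm M ^ 2 ≤ β * frobSq M) (α : ℝ) (e : κ → ℝ) :
    frobSq M * norm2Sq (e - (α / frobSq M) • (Mᵀ * M) *ᵥ e)
      ≤ frobSq M * norm2Sq e - (2 * α - α ^ 2 * β) * norm2Sq (M *ᵥ e) := by
  have hf := frobSq_pos hM
  have h_gram : norm2Sq ((Mᵀ * M) *ᵥ e) ≤ β * frobSq M * norm2Sq (M *ᵥ e) :=
    calc norm2Sq ((Mᵀ * M) *ᵥ e) = norm2Sq (Mᵀ *ᵥ M *ᵥ e) := by rw [mulVec_mulVec]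
      _ ≤ specNorm M ^ 2 * norm2Sq (M *ᵥ e) := by
          rw [← specNorm_transpose]; exact norm2Sq_mulVec_le _ _
      _ ≤ β * frobSq M * norm2Sq (M *ᵥ e) := by
          gcongr; rw [norm2Sq_eq_norm_toLp_sq]; positivity
  rw [norm2Sq_sub_smul, ← norm2Sq_mulVec_eq_dotProduct_mulVec]
  calc frobSq M * (norm2Sq e - 2 * (α / frobSq M) * norm2Sq (M *ᵥ e)
        + (α / frobSq M) ^ 2 * norm2Sq ((Mᵀ * M) *ᵥ e))
      ≤ frobSq M * (norm2Sq e - 2 * (α / frobSq M) * norm2Sq (M *ᵥ e)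
        + (α / frobSq M) ^ 2 * (β * frobSq M * norm2Sq (M *ᵥ e))) := by gcongr
    _ = frobSq M * norm2Sq e - (2 * α - α ^ 2 * β) * norm2Sq (M *ᵥ e) := by
        field_simp
        ring

theorem Finset.sum_univ_eq_sum_sum_of_partition {ι κ M : Type*} [Fintype ι] [Fintype κ]
    [DecidableEq ι] [AddCommMonoid M] {B : κ → Finset ι}
    (hdisj : ∀ i j, i ≠ j → Disjoint (B i) (B j)) (hcover : ∀ l, ∃ i, l ∈ B i) (g : ι → M) :
    ∑ l, g l = ∑ i, ∑ l ∈ B i, g l := by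
  rw [← Finset.sum_biUnion fun i _ j _ hij => hdisj i j hij]
  congr
  ext l
  simpa using hcover l

section RowPartition

variable {m n s : ℕ} {B : Fin s → Finset (Fin m)}

lemma sum_frobSq_rowSub (hdisj : ∀ i j, i ≠ j → Disjoint (B i) (B j))
    (hcover : ∀ l : Fin m, ∃ i, l ∈ B i) (A : Matrix (Fin m) (Fin n) ℝ) :
    ∑ i, frobSq (rowSub A (B i)) = frobSq A := by
  rw [frobSq, Finset.sum_univ_eq_sum_sum_of_partition hdisj hcover]
  exact Finset.sum_congr rfl fun i _ => Finset.sum_coe_sort (B i) fun l => ∑ j, A l j ^ 2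

lemma sum_norm2Sq_rowSub_mulVec (hdisj : ∀ i j, i ≠ j → Disjoint (B i) (B j))
    (hcover : ∀ l : Fin m, ∃ i, l ∈ B i) (A : Matrix (Fin m) (Fin n) ℝ) (v : Fin n → ℝ) :
    ∑ i, norm2Sq (rowSub A (B i) *ᵥ v) = norm2Sq (A *ᵥ v) := by
  rw [norm2Sq, Finset.sum_univ_eq_sum_sum_of_partition hdisj hcover]
  exact Finset.sum_congr rfl fun i _ => Finset.sum_coe_sort (B i) fun l => (A *ᵥ v) l ^ 2

end RowPartition

theorem stmt13_general {m n s : ℕ} (A : Matrix (Fin m) (Fin n) ℝ) (hA : A ≠ 0)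
    (hH : (Aᵀ * A).IsHermitian) (σr : ℝ)
    (hleast : IsLeast {x : ℝ | ∃ i, hH.eigenvalues i ≠ 0 ∧ x = hH.eigenvalues i} (σr ^ 2))
    (P : Matrix (Fin n) (Fin m) ℝ) (b : Fin m → ℝ)
    (B : Fin s → Finset (Fin m))
    (hdisj : ∀ i j, i ≠ j → Disjoint (B i) (B j))
    (hcover : ∀ l : Fin m, ∃ i, l ∈ B i)
    (hne : ∀ i, rowSub A (B i) ≠ 0)
    (βI : ℝ)
    (hβ : IsGreatest
      {x : ℝ | ∃ i, x = specNorm (rowSub A (B i)) ^ 2 / frobSq (rowSub A (B i))} βI)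
    (α : ℝ) (hα1 : 0 < α) (hα2 : α < 2 / βI)
    (x : Fin n → ℝ)
    (hx : ∃ w : Fin m → ℝ, x - P.mulVec b = Aᵀ.mulVec w) :
    ∑ i, (frobSq (rowSub A (B i)) / frobSq A) *
        norm2Sq (x - (α / frobSq (rowSub A (B i))) •
            ((rowSub A (B i))ᵀ * rowSub A (B i)).mulVec (x - P.mulVec b) - P.mulVec b)
      ≤ (1 - (2 * α - α ^ 2 * βI) * σr ^ 2 / frobSq A) * norm2Sq (x - P.mulVec b) := by
  obtain ⟨w, hw⟩ := hx
  set e := x - P *ᵥ b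
  set k := 2 * α - α ^ 2 * βI
  have hF := frobSq_pos hA
  have hβ_pos : 0 < βI := (div_pos_iff_of_pos_left two_pos).mp (hα1.trans hα2)
  have hk : 0 ≤ k := by
    have := (lt_div_iff₀ hβ_pos).mp hα2
    nlinarith
  have h_block (i : Fin s) :
      frobSq (rowSub A (B i)) / frobSq A * norm2Sq (x - (α / frobSq (rowSub A (B i))) •
          ((rowSub A (B i))ᵀ * rowSub A (B i)) *ᵥ e - P *ᵥ b)
        ≤ (frobSq (rowSub A (B i)) * norm2Sq e - k * norm2Sq (rowSub A (B i) *ᵥ e)) / frobSq A := by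
    have hβi := (div_le_iff₀ (frobSq_pos (hne i))).mp (hβ.2 ⟨i, rfl⟩)
    rw [sub_right_comm, div_mul_eq_mul_div]
    exact div_le_div_of_nonneg_right (frobSq_mul_norm2Sq_sub_smul_gram_le (hne i) hβi α e) hF.le
  have h_spectral : σr ^ 2 * norm2Sq e ≤ norm2Sq (A *ᵥ e) := by
    rw [hw]
    exact A.mul_norm2Sq_le_norm2Sq_mulVec_transpose_mulVec hH (fun j hj => hleast.2 ⟨j, hj, rfl⟩) w
  calc _ ≤ ∑ i, (frobSq (rowSub A (B i)) * norm2Sq e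
          - k * norm2Sq (rowSub A (B i) *ᵥ e)) / frobSq A := Finset.sum_le_sum fun i _ => h_block i
    _ = (frobSq A * norm2Sq e - k * norm2Sq (A *ᵥ e)) / frobSq A := by
        rw [← Finset.sum_div, Finset.sum_sub_distrib, ← Finset.sum_mul, ← Finset.mul_sum,
          sum_frobSq_rowSub hdisj hcover, sum_norm2Sq_rowSub_mulVec hdisj hcover]
    _ ≤ (frobSq A * norm2Sq e - k * (σr ^ 2 * norm2Sq e)) / frobSq A := by gcongr
    _ = (1 - k * σr ^ 2 / frobSq A) * norm2Sq e := by field_simp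

theorem stmt13 {m n s : ℕ} (A : Matrix (Fin m) (Fin n) ℝ) (hA : A ≠ 0)
    (hH : (Aᵀ * A).IsHermitian) (σr : ℝ) (hσr : 0 < σr)
    (hleast : IsLeast {x : ℝ | ∃ i, hH.eigenvalues i ≠ 0 ∧ x = hH.eigenvalues i} (σr ^ 2))
    (P : Matrix (Fin n) (Fin m) ℝ) (hP : IsMoorePenrose A P) (b : Fin m → ℝ)
    (B : Fin s → Finset (Fin m))
    (hdisj : ∀ i j, i ≠ j → Disjoint (B i) (B j))
    (hcover : ∀ l : Fin m, ∃ i, l ∈ B i)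
    (hne : ∀ i, rowSub A (B i) ≠ 0)
    (βI : ℝ)
    (hβ : IsGreatest
      {x : ℝ | ∃ i, x = specNorm (rowSub A (B i)) ^ 2 / frobSq (rowSub A (B i))} βI)
    (α : ℝ) (hα1 : 0 < α) (hα2 : α < 2 / βI)
    (x : Fin n → ℝ)
    (hx : ∃ w : Fin m → ℝ, x - P.mulVec b = Aᵀ.mulVec w) :
    ∑ i, (frobSq (rowSub A (B i)) / frobSq A) *
        norm2Sq (x - (α / frobSq (rowSub A (B i))) •
            ((rowSub A (B i))ᵀ * rowSub A (B i)).mulVec (x - P.mulVec b) - P.mulVec b)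
      ≤ (1 - (2 * α - α ^ 2 * βI) * σr ^ 2 / frobSq A) * norm2Sq (x - P.mulVec b) :=
  stmt13_general A hA hH σr hleast P b B hdisj hcover hne βI hβ α hα1 hα2 x hx
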